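/- For any subset X of a line in ℝ^n (equivalently, X ⊆ ℝ), the lattice Co(ℝ, X) of order-convex subsets of X is join-semidistributive. -/
import Mathlib


/-- `Y` is a relatively convex (equivalently, order-convex) subset of `X ⊆ ℝ`. -/
def relConvex (X Y : Set ℝ) : Prop :=
  Y = convexHull ℝ Y ∩ X

/-- The join in the lattice `Co(ℝ, X)`: `A ∨ B = conv(A ∪ B) ∩ X`. -/
def coJoin (X A B : Set ℝ) : Set ℝ :=
  convexHull ℝ (A ∪ B) ∩ X

/-- A point is in the convex hull of `S ⊆ ℝ` iff it is sandwiched by elements of `S`. -/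
lemma mem_hull_iff (S : Set ℝ) (x : ℝ) :
    x ∈ convexHull ℝ S ↔ ∃ a ∈ S, ∃ b ∈ S, a ≤ x ∧ x ≤ b := by
  constructor
  · intro hx
    have key : convexHull ℝ S ⊆ {x | ∃ a ∈ S, ∃ b ∈ S, a ≤ x ∧ x ≤ b} := by
      refine convexHull_min (fun y hy => ⟨y, hy, y, hy, le_refl _, le_refl _⟩) ?_
      rintro p ⟨a, ha, b, hb, h1, h2⟩ q ⟨a', ha', b', hb', h1', h2'⟩ α β hα hβ hαβ
      refine ⟨min a a', ?_, max b b', ?_, ?_, ?_⟩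
      · rcases le_total a a' with h | h
        · rwa [min_eq_left h]
        · rwa [min_eq_right h]
      · rcases le_total b b' with h | h
        · rwa [max_eq_right h]
        · rwa [max_eq_left h]
      · have h3 : min a a' ≤ p := le_trans (min_le_left _ _) h1
        have h4 : min a a' ≤ q := le_trans (min_le_right _ _) h1'
        simp only [smul_eq_mul]
        have e : α * (a ⊓ a') + β * (a ⊓ a') = a ⊓ a' := by rw [← add_mul, hαβ, one_mul]
        nlinarith [mul_le_mul_of_nonneg_left h3 hα, mul_le_mul_of_nonneg_left h4 hβ]
      · have h3 : p ≤ max b b' := le_trans h2 (le_max_left _ _)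
        have h4 : q ≤ max b b' := le_trans h2' (le_max_right _ _)
        simp only [smul_eq_mul]
        have e : α * (b ⊔ b') + β * (b ⊔ b') = b ⊔ b' := by rw [← add_mul, hαβ, one_mul]
        nlinarith [mul_le_mul_of_nonneg_left h3 hα, mul_le_mul_of_nonneg_left h4 hβ]
    exact key hx
  · rintro ⟨a, ha, b, hb, h1, h2⟩
    have : x ∈ segment ℝ a b := by
      rw [segment_eq_Icc (le_trans h1 h2)]
      exact ⟨h1, h2⟩
    exact segment_subset_convexHull ha hb this

/-- Upper-witness lemma: from upper witnesses in both `A ∪ B` and `A ∪ C`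
we can find one in `A ∪ (B ∩ C)`. -/
lemma upper_witness (X A B C : Set ℝ) (hB : relConvex X B) (hC : relConvex X C)
    (h : coJoin X A B = coJoin X A C) (x b c : ℝ)
    (hb : b ∈ A ∪ B) (hxb : x ≤ b) (hc : c ∈ A ∪ C) (hxc : x ≤ c) :
    ∃ v ∈ A ∪ (B ∩ C), x ≤ v := by
  rcases hb with hbA | hbB
  · exact ⟨b, Or.inl hbA, hxb⟩
  rcases hc with hcA | hcC
  · exact ⟨c, Or.inl hcA, hxc⟩
  have hbX : b ∈ X := by rw [hB] at hbB; exact hbB.2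
  have hcX : c ∈ X := by rw [hC] at hcC; exact hcC.2
  rcases le_total c b with hcb | hbc
  · -- b ≥ c.  b ∈ A∨B = A∨C gives an element of A∪C above b.
    have hbJ : b ∈ coJoin X A C := by
      rw [← h]
      exact ⟨subset_convexHull ℝ _ (Or.inr hbB), hbX⟩
    obtain ⟨a', -, q, hq, -, hbq⟩ := (mem_hull_iff _ _).1 hbJ.1
    rcases hq with hqA | hqC
    · exact ⟨q, Or.inl hqA, le_trans hxb hbq⟩
    · have : b ∈ C := by
        rw [hC]
        exact ⟨(mem_hull_iff _ _).2 ⟨c, hcC, q, hqC, hcb, hbq⟩, hbX⟩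
      exact ⟨b, Or.inr ⟨hbB, this⟩, hxb⟩
  · -- c ≥ b.  c ∈ A∨C = A∨B gives an element of A∪B above c.
    have hcJ : c ∈ coJoin X A B := by
      rw [h]
      exact ⟨subset_convexHull ℝ _ (Or.inr hcC), hcX⟩
    obtain ⟨a', -, q, hq, -, hcq⟩ := (mem_hull_iff _ _).1 hcJ.1
    rcases hq with hqA | hqB
    · exact ⟨q, Or.inl hqA, le_trans hxc hcq⟩
    · have : c ∈ B := by
        rw [hB]
        exact ⟨(mem_hull_iff _ _).2 ⟨b, hbB, q, hqB, hbc, hcq⟩, hcX⟩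
      exact ⟨c, Or.inr ⟨this, hcC⟩, hxc⟩

/-- Lower-witness lemma, dual to `upper_witness`. -/
lemma lower_witness (X A B C : Set ℝ) (hB : relConvex X B) (hC : relConvex X C)
    (h : coJoin X A B = coJoin X A C) (x b c : ℝ)
    (hb : b ∈ A ∪ B) (hbx : b ≤ x) (hc : c ∈ A ∪ C) (hcx : c ≤ x) :
    ∃ v ∈ A ∪ (B ∩ C), v ≤ x := by
  rcases hb with hbA | hbB
  · exact ⟨b, Or.inl hbA, hbx⟩
  rcases hc with hcA | hcC
  · exact ⟨c, Or.inl hcA, hcx⟩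
  have hbX : b ∈ X := by rw [hB] at hbB; exact hbB.2
  have hcX : c ∈ X := by rw [hC] at hcC; exact hcC.2
  rcases le_total b c with hbc | hcb
  · -- b ≤ c.  b ∈ A∨B = A∨C gives an element of A∪C below b.
    have hbJ : b ∈ coJoin X A C := by
      rw [← h]
      exact ⟨subset_convexHull ℝ _ (Or.inr hbB), hbX⟩
    obtain ⟨q, hq, q', -, hqb, -⟩ := (mem_hull_iff _ _).1 hbJ.1
    rcases hq with hqA | hqC
    · exact ⟨q, Or.inl hqA, le_trans hqb hbx⟩
    · have : b ∈ C := by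
        rw [hC]
        exact ⟨(mem_hull_iff _ _).2 ⟨q, hqC, c, hcC, hqb, hbc⟩, hbX⟩
      exact ⟨b, Or.inr ⟨hbB, this⟩, hbx⟩
  · -- c ≤ b.  c ∈ A∨C = A∨B gives an element of A∪B below c.
    have hcJ : c ∈ coJoin X A B := by
      rw [h]
      exact ⟨subset_convexHull ℝ _ (Or.inr hcC), hcX⟩
    obtain ⟨q, hq, q', -, hqc, -⟩ := (mem_hull_iff _ _).1 hcJ.1
    rcases hq with hqA | hqB
    · exact ⟨q, Or.inl hqA, le_trans hqc hcx⟩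
    · have : c ∈ B := by
        rw [hB]
        exact ⟨(mem_hull_iff _ _).2 ⟨q, hqB, b, hbB, hqc, hcb⟩, hcX⟩
      exact ⟨c, Or.inr ⟨this, hcC⟩, hcx⟩

/-- For any `X ⊆ ℝ`, the lattice `Co(ℝ, X)` of order-convex subsets of `X` is
join-semidistributive. -/
theorem jsd_of_subset_real (X : Set ℝ) :
    ∀ A B C, relConvex X A → relConvex X B → relConvex X C →
      coJoin X A B = coJoin X A C → coJoin X A B = coJoin X A (B ∩ C) := by
  intro A B C _hA hB hC h
  apply Set.Subset.antisymm
  · rintro x ⟨hxhull, hxX⟩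
    have hxC : x ∈ coJoin X A C := by rw [← h]; exact ⟨hxhull, hxX⟩
    obtain ⟨a₁, ha₁, b₁, hb₁, ha₁x, hxb₁⟩ := (mem_hull_iff _ _).1 hxhull
    obtain ⟨a₂, ha₂, b₂, hb₂, ha₂x, hxb₂⟩ := (mem_hull_iff _ _).1 hxC.1
    obtain ⟨v, hv, hxv⟩ := upper_witness X A B C hB hC h x b₁ b₂ hb₁ hxb₁ hb₂ hxb₂
    obtain ⟨u, hu, hux⟩ := lower_witness X A B C hB hC h x a₁ a₂ ha₁ ha₁x ha₂ ha₂x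
    exact ⟨(mem_hull_iff _ _).2 ⟨u, hu, v, hv, hux, hxv⟩, hxX⟩
  · rintro x ⟨hxhull, hxX⟩
    refine ⟨convexHull_mono ?_ hxhull, hxX⟩
    exact Set.union_subset_union_right A Set.inter_subset_left
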